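/- Let k be a commutative ring, A a Z-graded k-algebra, f₁,…,fₙ ∈ A homogeneous of degree d ≥ 1, h : k[T₁,…,Tₙ] → A the k-algebra morphism sending Tᵢ to fᵢ, and Θ : k[T₁,…,Tₙ] → A[T₁,…,Tₙ,Z] the canonical inclusion (the composite of the coefficient extension k[T] → A[T] with the inclusion A[T] ⊆ A[T,Z]). Then ker(h) = Θ⁻¹( TF_{(Z)}((f₁−T₁Z, …, fₙ−TₙZ)) ), the inertia forms being computed in A[T₁,…,Tₙ,Z] with respect to the ideal (Z). -/

import Mathlib

/-- The ideal of inertia forms (Trägheitsformen) of `I` with respect to `J`. -/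
noncomputable def inertiaForms {R : Type*} [CommRing R] (J I : Ideal R) : Ideal R :=
  ⨆ n : ℕ, I.colon ((J ^ n : Ideal R) : Set R)

/-- The ideal `(f₁ - T₁Z, …, fₙ - TₙZ)` of `A[T₁,…,Tₙ][Z]`. -/
noncomputable def fTZIdeal {A : Type*} [CommRing A] {n : ℕ} (f : Fin n → A) :
    Ideal (Polynomial (MvPolynomial (Fin n) A)) :=
  Ideal.span (Set.range fun i =>
    Polynomial.C (MvPolynomial.C (f i)) - Polynomial.C (MvPolynomial.X i) * Polynomial.X)

/-!
Substituting `Tᵢ ↦ Tᵢ Z` sends a form `φ` of degree `j` to `φ Zʲ`, and modulo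
`(f₁ - T₁Z, …, fₙ - TₙZ)` this substitution agrees with evaluation at `f`. As all `fᵢ` have the
same degree `d ≠ 0`, the homogeneous components `P_j` of `P` evaluate into the distinct graded
pieces `A_{jd}`, so `P(f) = 0` forces `P_j(f) = 0` for every `j`, whence
`P Z^{deg P} = Σ_j (P_j Zʲ) Z^{deg P - j}` lies in the ideal. Conversely, the evaluation
`T ↦ f, Z ↦ 1` kills the ideal and sends `P Zᵐ` to `P(f)`.
-/

open MvPolynomial

theorem mem_inertiaForms_span_singleton_iff {R : Type*} [CommRing R] {I : Ideal R} {x a : R} :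
    a ∈ inertiaForms (Ideal.span {x}) I ↔ ∃ N : ℕ, a * x ^ N ∈ I := by
  have hmono : Monotone fun N : ℕ => I.colon ((Ideal.span {x} ^ N : Ideal R) : Set R) :=
    fun _ _ h => Submodule.colon_mono le_rfl (Ideal.pow_le_pow_right h)
  rw [inertiaForms, Submodule.mem_iSup_of_directed _ hmono.directed_le]
  simp only [Ideal.span_singleton_pow, Ideal.mem_colon_span_singleton]

section Graded

variable {ι R A σ : Type*} [CommSemiring R] [CommSemiring A] [Algebra R A]

theorem MvPolynomial.IsHomogeneous.aeval_mem_graded [AddCommMonoid ι] (𝒜 : ι → Submodule R A)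
    [SetLike.GradedMonoid 𝒜] {d : ι} {f : σ → A} (hf : ∀ i, f i ∈ 𝒜 d)
    {φ : MvPolynomial σ R} {j : ℕ} (hφ : φ.IsHomogeneous j) :
    MvPolynomial.aeval f φ ∈ 𝒜 (j • d) := by
  rw [aeval_def, eval₂_eq]
  refine Submodule.sum_mem _ fun α hα => ?_
  rw [← Algebra.smul_def]
  refine Submodule.smul_mem _ _ ?_
  rw [hφ.degree_eq_sum_deg_support hα, ← Finset.sum_nsmul_assoc]
  exact SetLike.prod_pow_mem_graded 𝒜 _ f _ fun i _ => hf i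

theorem decompose_aeval_nsmul [AddCommMonoid ι] [DecidableEq ι] (𝒜 : ι → Submodule R A)
    [GradedAlgebra 𝒜] {d : ι} (hd : Function.Injective fun j : ℕ => j • d) {f : σ → A}
    (hf : ∀ i, f i ∈ 𝒜 d) (P : MvPolynomial σ R) (j : ℕ) :
    (DirectSum.decompose 𝒜 (aeval f P) (j • d) : A) = aeval f (homogeneousComponent j P) := by
  have hcomp : ∀ m, (DirectSum.decompose 𝒜 (aeval f (homogeneousComponent m P)) (j • d) : A)
      = if m = j then aeval f (homogeneousComponent m P) else 0 := by
    intro m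
    have hmem := (homogeneousComponent_isHomogeneous m P).aeval_mem_graded 𝒜 hf
    split_ifs with hmj
    · rw [← hmj, DirectSum.decompose_of_mem_same 𝒜 hmem]
    · exact DirectSum.decompose_of_mem_ne 𝒜 hmem (hd.ne hmj)
  conv_lhs => rw [← sum_homogeneousComponent P]
  rw [map_sum, DirectSum.decompose_sum, DFinsupp.finsetSum_apply,
    AddSubmonoidClass.coe_finsetSum, Finset.sum_congr rfl fun m _ => hcomp m,
    Finset.sum_ite_eq']
  split_ifs with hj
  · rfl
  · rw [homogeneousComponent_eq_zero _ _ (by simpa using hj), map_zero]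

end Graded

section Substitution

variable {R σ : Type*} [CommSemiring R]

theorem aeval_C_X_mul_X_monomial (α : σ →₀ ℕ) (c : R) :
    aeval (fun i => Polynomial.C (X i) * Polynomial.X) (monomial α c)
      = Polynomial.C (monomial α c) * Polynomial.X ^ α.degree := by
  rw [aeval_monomial, monomial_eq, Finsupp.prod, Finsupp.prod, Finsupp.degree_apply]
  simp only [map_mul, map_prod, map_pow, mul_pow, Finset.prod_mul_distrib,
    Finset.prod_pow_eq_pow_sum]
  rw [Polynomial.algebraMap_apply, MvPolynomial.algebraMap_eq, mul_assoc]

theorem MvPolynomial.IsHomogeneous.aeval_C_X_mul_X {φ : MvPolynomial σ R} {j : ℕ}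
    (hφ : φ.IsHomogeneous j) :
    MvPolynomial.aeval (fun i => Polynomial.C (X i) * Polynomial.X) φ
      = Polynomial.C φ * Polynomial.X ^ j := by
  conv_lhs => rw [φ.as_sum]
  conv_rhs => rw [φ.as_sum]
  simp only [map_sum, Finset.sum_mul]
  refine Finset.sum_congr rfl fun α hα => ?_
  rw [aeval_C_X_mul_X_monomial, Finsupp.degree_apply, ← hφ.degree_eq_sum_deg_support hα]

end Substitution

section Homogenization

variable {k A : Type*} [CommSemiring k] [CommRing A] [Algebra k A] {n : ℕ} (f : Fin n → A)

theorem aeval_C_X_mul_X_sub_mem_fTZIdeal (φ : MvPolynomial (Fin n) A) :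
    aeval (fun i => Polynomial.C (X i) * Polynomial.X) φ - Polynomial.C (C (eval f φ))
      ∈ fTZIdeal f := by
  rw [← Ideal.Quotient.eq]
  suffices h : (Ideal.Quotient.mk (fTZIdeal f)).comp
      (aeval fun i => Polynomial.C (X i) * Polynomial.X : MvPolynomial (Fin n) A →ₐ[A] _).toRingHom
      = (Ideal.Quotient.mk (fTZIdeal f)).comp (Polynomial.C.comp (C.comp (eval f))) from
    RingHom.congr_fun h φ
  refine MvPolynomial.ringHom_ext (fun a => ?_) (fun i => ?_)
  · simp [Polynomial.algebraMap_apply]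
  · simp only [RingHom.comp_apply, AlgHom.toRingHom_eq_coe, RingHom.coe_coe, aeval_X, eval_X,
      Ideal.Quotient.eq]
    rw [← neg_sub]
    exact neg_mem (Ideal.subset_span ⟨i, rfl⟩)

theorem C_map_mul_X_pow_mem_fTZIdeal {φ : MvPolynomial (Fin n) k} {j : ℕ}
    (hφ : φ.IsHomogeneous j) (h : aeval f φ = 0) :
    Polynomial.C (map (algebraMap k A) φ) * Polynomial.X ^ j ∈ fTZIdeal f := by
  have := aeval_C_X_mul_X_sub_mem_fTZIdeal f (map (algebraMap k A) φ)
  rwa [(hφ.map _).aeval_C_X_mul_X, eval_map, ← aeval_def, h, map_zero, map_zero,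
    sub_zero] at this

theorem C_map_mul_X_pow_totalDegree_mem_fTZIdeal {P : MvPolynomial (Fin n) k}
    (hP : ∀ j, aeval f (homogeneousComponent j P) = 0) :
    Polynomial.C (map (algebraMap k A) P) * Polynomial.X ^ P.totalDegree ∈ fTZIdeal f := by
  have hsum : map (algebraMap k A) P = ∑ j ∈ Finset.range (P.totalDegree + 1),
      map (algebraMap k A) (homogeneousComponent j P) := by
    rw [← map_sum, sum_homogeneousComponent]
  rw [hsum, map_sum, Finset.sum_mul]
  refine Ideal.sum_mem _ fun j hj => ?_
  rw [← Nat.add_sub_cancel' (Finset.mem_range_succ_iff.mp hj), pow_add, ← mul_assoc]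
  exact Ideal.mul_mem_right _ _
    (C_map_mul_X_pow_mem_fTZIdeal f (homogeneousComponent_isHomogeneous j P) (hP j))

theorem fTZIdeal_le_ker_eval₂ :
    fTZIdeal f ≤ RingHom.ker (Polynomial.eval₂RingHom (eval f) 1) := by
  rw [fTZIdeal, Ideal.span_le]
  rintro _ ⟨i, rfl⟩
  simp

theorem aeval_eq_zero_of_C_map_mul_X_pow_mem_fTZIdeal {P : MvPolynomial (Fin n) k} {m : ℕ}
    (h : Polynomial.C (map (algebraMap k A) P) * Polynomial.X ^ m ∈ fTZIdeal f) :
    aeval f P = 0 := by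
  simpa [eval_map, aeval_def] using fTZIdeal_le_ker_eval₂ f h

end Homogenization

/-- with `h : k[T₁,…,Tₙ] → A`, `Tᵢ ↦ fᵢ`, and
`Θ : k[T₁,…,Tₙ] → A[T₁,…,Tₙ,Z]` the canonical inclusion (coefficient extension followed
by `A[T] ⊆ A[T][Z]`), one has `ker h = Θ⁻¹(TF_{(Z)}((f₁-T₁Z,…,fₙ-TₙZ)))`. -/
theorem statement4 {k A : Type*} [CommRing k] [CommRing A] [Algebra k A]
    (𝒜 : ℤ → Submodule k A) [GradedAlgebra 𝒜]
    (n : ℕ) (d : ℤ) (hd : 1 ≤ d) (f : Fin n → A) (hf : ∀ i, f i ∈ 𝒜 d) :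
    RingHom.ker (MvPolynomial.aeval f : MvPolynomial (Fin n) k →ₐ[k] A)
      = Ideal.comap
          ((Polynomial.C : MvPolynomial (Fin n) A →+* Polynomial (MvPolynomial (Fin n) A)).comp
            (MvPolynomial.map (algebraMap k A)))
          (inertiaForms (Ideal.span {Polynomial.X}) (fTZIdeal f)) := by
  have hd_inj : Function.Injective fun j : ℕ => j • d := fun a b h => by
    simpa [show d ≠ 0 by omega] using h
  ext P
  rw [RingHom.mem_ker, Ideal.mem_comap, RingHom.comp_apply, mem_inertiaForms_span_singleton_iff]
  refine ⟨fun hP => ⟨P.totalDegree, C_map_mul_X_pow_totalDegree_mem_fTZIdeal f fun j => ?_⟩,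
    fun ⟨m, hm⟩ => aeval_eq_zero_of_C_map_mul_X_pow_mem_fTZIdeal f hm⟩
  rw [← decompose_aeval_nsmul 𝒜 hd_inj hf, hP, DirectSum.decompose_zero]
  rfl
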